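/- arXiv:1210.4407 — 3 statements merged into one kernel-verified Lean document; each statement's English description precedes it below -/
import Mathlib

section
/- Let k be an algebraically closed field, n ≥ 1, and r₁,…,rₙ positive integers coprime to the characteristic of k. Let R = lcm(r₁,…,rₙ) and let C ⊂ 𝔸^{n+1} be the affine scheme defined by y₁^{r₁} = x, …, yₙ^{rₙ} = x. Then C has exactly (r₁⋯rₙ)/R irreducible components. -/
/-!
Write `R = lcm rᵢ` and `dᵢ = R / rᵢ`. For `η ∈ ∏ μ_{rᵢ}` the branch `t ↦ (t^R, ηᵢ t^{dᵢ})` is an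
irreducible curve in `C` with prime ideal `P_η`, and every `k`-point of `C` lies on a branch
(take an `R`-th root of `x`), so by the Nullstellensatz the radical of the ideal of `C` is `⋂ P_η`.

If `P_a ⊆ P_b`, each binomial `a^v y^u - a^u y^v` with `∑ dᵢuᵢ = ∑ dᵢvᵢ` vanishes at the point
`(1, b)`, so `ρ = a⁻¹b` satisfies `ρ^u = ρ^v` for all such `u, v`. As `gcd dᵢ = 1`, a Bézout
relation `∑ cᵢdᵢ = 1` gives `ρᵢ = ζ^{dᵢ}` with `ζ = ρ^c ∈ μ_R`; conversely `t ↦ ζt` shows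
`P_η = P_{ζ·η}`. So the `P_η` form an antichain, they are the minimal primes, and they correspond
to the cosets of the image of the embedding `μ_R ↪ ∏ μ_{rᵢ}`, `ζ ↦ (ζ^{dᵢ})`, of which there are
`∏ rᵢ / R`.
-/

open MvPolynomial

theorem Set.ncard_range_eq_index {G β : Type*} [Group G] (H : Subgroup G) (f : G → β)
    (hf : ∀ a b, f a = f b ↔ a⁻¹ * b ∈ H) : (Set.range f).ncard = H.index := by
  have hker : Setoid.ker f = QuotientGroup.leftRel H := by
    ext a b
    rw [Setoid.ker_def, QuotientGroup.leftRel_apply, hf]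
  rw [← Nat.card_coe_set_eq, ← Nat.card_congr (Setoid.quotientKerEquivRange f), hker]
  rfl

theorem Ideal.minimalPrimes_eq_range_of_radical_eq_iInf {R ι : Type*} [CommRing R] [Finite ι]
    {I : Ideal R} {P : ι → Ideal R} (hP : ∀ i, (P i).IsPrime) (hI : I.radical = ⨅ i, P i)
    (hP_le : ∀ i j, P i ≤ P j → P j ≤ P i) : I.minimalPrimes = Set.range P := by
  have hle : ∀ i, I ≤ P i := fun i => I.le_radical.trans (hI ▸ iInf_le P i)
  have hcontains : ∀ q : Ideal R, q.IsPrime → I ≤ q → ∃ i, P i ≤ q := by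
    intro q hq hIq
    have := Fintype.ofFinite ι
    have hinf : Finset.univ.inf P ≤ q := by
      rw [Finset.inf_univ_eq_iInf, ← hI]
      exact hq.radical_le_iff.mpr hIq
    obtain ⟨i, -, hi⟩ := hq.inf_le'.mp hinf
    exact ⟨i, hi⟩
  ext q
  constructor
  · rintro ⟨⟨hq, hIq⟩, hmin⟩
    obtain ⟨i, hi⟩ := hcontains q hq hIq
    exact ⟨i, le_antisymm hi (hmin ⟨hP i, hle i⟩ hi)⟩
  · rintro ⟨i, rfl⟩
    refine ⟨⟨hP i, hle i⟩, fun q ⟨hq, hIq⟩ hqi => ?_⟩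
    obtain ⟨j, hj⟩ := hcontains q hq hIq
    exact (hP_le j i (hj.trans hqi)).trans hj

theorem PrimeSpectrum.ncard_irreducibleComponents_zeroLocus {R : Type*} [CommRing R] (I : Ideal R) :
    (irreducibleComponents (PrimeSpectrum.zeroLocus (I : Set R))).ncard =
      I.minimalPrimes.ncard := by
  rw [← Nat.card_coe_set_eq, ← Nat.card_coe_set_eq]
  exact (Nat.card_congr (Ideal.minimalPrimes.equivIrreducibleComponents I).toEquiv).symm

section Lcm

variable {ι : Type*} [Fintype ι]

theorem exists_sum_mul_lcm_div_eq_one [Nonempty ι] (r : ι → ℕ) (hr : ∀ i, 0 < r i) :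
    ∃ c : ι → ℤ, ∑ i, c i * ((Finset.univ.lcm r / r i : ℕ) : ℤ) = 1 := by
  set R := Finset.univ.lcm r
  have hR : R ≠ 0 := Finset.lcm_ne_zero_iff.mpr fun i _ => (hr i).ne'
  have hrR : ∀ i, (r i : ℤ) * (R / r i : ℕ) = R := fun i => by
    exact_mod_cast Nat.mul_div_cancel' (Finset.dvd_lcm (Finset.mem_univ i))
  obtain ⟨c, hc⟩ := Finset.gcd_eq_sum_mul Finset.univ fun i => ((R / r i : ℕ) : ℤ)
  set g := Finset.univ.gcd fun i => ((R / r i : ℕ) : ℤ)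
  suffices hg1 : g = 1 from ⟨c, by simpa only [mul_comm (c _), hg1] using hc.symm⟩
  -- `g ∣ R / rᵢ` makes every `rᵢ` divide `R / g`, hence `R ∣ R / g`.
  have hg : ∀ i, g ∣ (R / r i : ℕ) := fun i => Finset.gcd_dvd (Finset.mem_univ i)
  obtain ⟨m, hm⟩ : g ∣ R :=
    (hg (Classical.arbitrary ι)).trans ⟨_, (hrR _).symm.trans (mul_comm _ _)⟩
  have hg0 : g ≠ 0 := by rintro h; simp [h, hR] at hm
  have hm0 : m ≠ 0 := by rintro rfl; simp [hR] at hm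
  have hRm : (R : ℤ) ∣ m := by
    rw [Int.natCast_dvd]
    refine Finset.lcm_dvd fun i _ => ?_
    obtain ⟨e, he⟩ := hg i
    rw [← Int.natCast_dvd]
    refine ⟨e, mul_left_cancel₀ hg0 ?_⟩
    rw [← hm, ← hrR i, he]
    ring
  obtain ⟨e, he⟩ := hm ▸ hRm
  have hge : g * e = 1 := mul_left_cancel₀ hm0 (by linear_combination he.symm)
  have hnorm : normalize g = g := Finset.normalize_gcd
  rw [← hnorm, normalize_eq_one]
  exact isUnit_of_dvd_one ⟨e, hge.symm⟩

theorem natCast_lcm_ne_zero {K : Type*} [Field K] {r : ι → ℕ} (hr : ∀ i, (r i : K) ≠ 0) :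
    ((Finset.univ.lcm r : ℕ) : K) ≠ 0 := by
  obtain ⟨m, hm⟩ := Finset.lcm_dvd_prod Finset.univ r
  have hprod : ((∏ i, r i : ℕ) : K) ≠ 0 := by
    rw [Nat.cast_prod]
    exact Finset.prod_ne_zero_iff.mpr fun i _ => hr i
  intro h
  exact hprod (by rw [hm, Nat.cast_mul, h, zero_mul])

variable {M : Type*} [CommGroup M] {d : ι → ℕ} {c : ι → ℤ}

theorem eq_one_of_pow_eq_one_of_sum_mul_eq_one (hc : ∑ i, c i * d i = 1) {ζ : M}
    (hζ : ∀ i, ζ ^ d i = 1) : ζ = 1 := by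
  have h : ((orderOf ζ : ℕ) : ℤ) ∣ 1 := hc ▸ Finset.dvd_sum fun i _ =>
    (Int.natCast_dvd_natCast.mpr (orderOf_dvd_of_pow_eq_one (hζ i))).mul_left _
  exact orderOf_eq_one_iff.mp (Nat.dvd_one.mp (Int.natCast_dvd_natCast.mp h))

theorem prod_zpow_eq_one_of_sum_mul_eq_zero {ρ : ι → M}
    (hρ : ∀ u v : ι → ℕ, ∑ i, d i * u i = ∑ i, d i * v i → ∏ i, ρ i ^ u i = ∏ i, ρ i ^ v i)
    {w : ι → ℤ} (hw : ∑ i, (d i : ℤ) * w i = 0) : ∏ i, ρ i ^ w i = 1 := by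
  have huv := hρ (fun i => (w i).toNat) (fun i => (-w i).toNat) <| by
    have : ∑ i, (d i : ℤ) * ((w i).toNat - (-w i).toNat) = 0 := by
      simp only [Int.toNat_sub_toNat_neg]
      exact hw
    simp only [mul_sub, Finset.sum_sub_distrib, sub_eq_zero] at this
    exact_mod_cast this
  calc ∏ i, ρ i ^ w i = (∏ i, ρ i ^ (w i).toNat) / ∏ i, ρ i ^ (-w i).toNat := by
        rw [← Finset.prod_div_distrib]
        refine Finset.prod_congr rfl fun i _ => ?_
        rw [← zpow_natCast, ← zpow_natCast, div_eq_mul_inv, ← zpow_sub, Int.toNat_sub_toNat_neg]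
    _ = 1 := by rw [huv, div_self']

theorem exists_pow_eq_of_sum_mul_eq_one (hc : ∑ i, c i * d i = 1) {ρ : ι → M}
    (hρ : ∀ u v : ι → ℕ, ∑ i, d i * u i = ∑ i, d i * v i → ∏ i, ρ i ^ u i = ∏ i, ρ i ^ v i) :
    ∃ ζ : M, ∀ i, ρ i = ζ ^ d i := by
  classical
  refine ⟨∏ j, ρ j ^ c j, fun i => ?_⟩
  have := prod_zpow_eq_one_of_sum_mul_eq_zero hρ
    (w := fun j => (Pi.single i 1 : ι → ℤ) j - d i * c j) <| by
    simp only [mul_sub, Finset.sum_sub_distrib]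
    rw [show ∑ j, (d j : ℤ) * (d i * c j) = d i * ∑ j, c j * d j by
      rw [Finset.mul_sum]; exact Finset.sum_congr rfl fun _ _ => by ring, hc]
    simp [Pi.single_apply]
  simp only [zpow_sub, mul_comm (d i : ℤ), zpow_mul, zpow_natCast, Finset.prod_mul_distrib,
    Finset.prod_inv_distrib, Finset.prod_pow, Pi.single_apply] at this
  simpa [mul_inv_eq_one] using this

end Lcm

section RootsOfUnity

variable {ι M : Type*} [Fintype ι] [CommMonoid M]

def rootsOfUnity.lcmPowHom (r : ι → ℕ) :
    rootsOfUnity (Finset.univ.lcm r) M →* ((i : ι) → rootsOfUnity (r i) M) where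
  toFun ζ i := ⟨ζ ^ (Finset.univ.lcm r / r i), by
    rw [mem_rootsOfUnity, ← pow_mul, Nat.div_mul_cancel (Finset.dvd_lcm (Finset.mem_univ i)),
      (mem_rootsOfUnity _ _).mp ζ.2]⟩
  map_one' := by ext; simp
  map_mul' ζ ξ := by ext; simp [mul_pow]

theorem rootsOfUnity.lcmPowHom_injective [Nonempty ι] {r : ι → ℕ} (hr : ∀ i, 0 < r i) :
    Function.Injective (rootsOfUnity.lcmPowHom (M := M) r) := by
  obtain ⟨c, hc⟩ := exists_sum_mul_lcm_div_eq_one r hr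
  refine (injective_iff_map_eq_one _).mpr fun ζ hζ => eq_one_of_pow_eq_one_of_sum_mul_eq_one hc
    fun i => Subtype.ext (congrArg (fun η : (i : ι) → rootsOfUnity (r i) M => (η i : Mˣ)) hζ)

end RootsOfUnity

namespace RootCurve

noncomputable section

variable {k : Type*} [Field k] {n : ℕ} {r : Fin n → ℕ}

def ideal (k : Type*) [Field k] (r : Fin n → ℕ) : Ideal (MvPolynomial (Fin (n + 1)) k) :=
  Ideal.span (Set.range fun i : Fin n => (X i.succ : MvPolynomial (Fin (n + 1)) k) ^ r i - X 0)

def branchPoint (r : Fin n → ℕ) (η : (i : Fin n) → rootsOfUnity (r i) k) (t : k) :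
    Fin (n + 1) → k :=
  Fin.cons (t ^ Finset.univ.lcm r) fun i => (η i : kˣ) * t ^ (Finset.univ.lcm r / r i)

def branchParam (r : Fin n → ℕ) (η : (i : Fin n) → rootsOfUnity (r i) k) :
    MvPolynomial (Fin (n + 1)) k →ₐ[k] Polynomial k :=
  aeval (Fin.cons (Polynomial.X ^ Finset.univ.lcm r)
    fun i => Polynomial.C ((η i : kˣ) : k) * Polynomial.X ^ (Finset.univ.lcm r / r i))

def branchIdeal (r : Fin n → ℕ) (η : (i : Fin n) → rootsOfUnity (r i) k) :
    Ideal (MvPolynomial (Fin (n + 1)) k) :=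
  RingHom.ker (branchParam r η)

instance (η : (i : Fin n) → rootsOfUnity (r i) k) : (branchIdeal r η).IsPrime :=
  RingHom.ker_isPrime _

theorem eval_branchParam (η : (i : Fin n) → rootsOfUnity (r i) k)
    (f : MvPolynomial (Fin (n + 1)) k) (t : k) :
    (branchParam r η f).eval t = eval (branchPoint r η t) f := by
  rw [← Polynomial.coe_aeval_eq_eval, ← AlgHom.comp_apply, branchParam, comp_aeval]
  change eval _ f = eval _ f
  congr 2 with i
  cases i using Fin.cases <;> simp [branchPoint]

theorem mem_branchIdeal [Infinite k] {η : (i : Fin n) → rootsOfUnity (r i) k}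
    {f : MvPolynomial (Fin (n + 1)) k} :
    f ∈ branchIdeal r η ↔ ∀ t, eval (branchPoint r η t) f = 0 := by
  simp only [branchIdeal, RingHom.mem_ker, ← eval_branchParam]
  exact ⟨fun h t => by simp [h], fun h => Polynomial.funext (by simpa using h)⟩

theorem eval_branchPoint_prod_X_pow (η : (i : Fin n) → rootsOfUnity (r i) k) (t : k)
    (u : Fin n → ℕ) :
    eval (branchPoint r η t) (∏ i, X i.succ ^ u i) =
      (∏ i, ((η i : kˣ) : k) ^ u i) * t ^ ∑ i, Finset.univ.lcm r / r i * u i := by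
  simp only [map_prod, map_pow, eval_X, branchPoint, Fin.cons_succ, mul_pow,
    Finset.prod_mul_distrib, ← pow_mul, Finset.prod_pow_eq_pow_sum]

theorem branchPoint_mul_lcmPowHom (η : (i : Fin n) → rootsOfUnity (r i) k)
    (ζ : rootsOfUnity (Finset.univ.lcm r) k) (t : k) :
    branchPoint r (η * rootsOfUnity.lcmPowHom r ζ) t = branchPoint r η ((ζ : kˣ) * t) := by
  have hζ := (mem_rootsOfUnity' _ _).mp ζ.2
  funext j
  cases j using Fin.cases with
  | zero => simp [branchPoint, mul_pow, hζ]
  | succ i => simp [branchPoint, rootsOfUnity.lcmPowHom, mul_pow]; ring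

theorem ideal_le_branchIdeal (η : (i : Fin n) → rootsOfUnity (r i) k) :
    ideal k r ≤ branchIdeal r η := by
  rw [ideal, Ideal.span_le]
  rintro _ ⟨i, rfl⟩
  rw [SetLike.mem_coe, branchIdeal, RingHom.mem_ker, branchParam, map_sub, map_pow, aeval_X,
    aeval_X, Fin.cons_succ, Fin.cons_zero, mul_pow, ← map_pow, (mem_rootsOfUnity' _ _).mp (η i).2,
    map_one, one_mul, ← pow_mul, Nat.div_mul_cancel (Finset.dvd_lcm (Finset.mem_univ i)),
    sub_self]

theorem exists_branchPoint_eq [IsAlgClosed k] (hr : ∀ i, 0 < r i) {x : Fin (n + 1) → k}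
    (hx : x ∈ MvPolynomial.zeroLocus k (ideal k r)) : ∃ η t, branchPoint r η t = x := by
  have hR : 0 < Finset.univ.lcm r :=
    Nat.pos_of_ne_zero (Finset.lcm_ne_zero_iff.mpr fun i _ => (hr i).ne')
  have hd : ∀ i, Finset.univ.lcm r / r i * r i = Finset.univ.lcm r :=
    fun i => Nat.div_mul_cancel (Finset.dvd_lcm (Finset.mem_univ i))
  have hxi : ∀ i : Fin n, x i.succ ^ r i = x 0 := fun i => by
    simpa [sub_eq_zero] using hx _ (Ideal.subset_span ⟨i, rfl⟩)
  obtain ⟨t, ht⟩ := IsAlgClosed.exists_pow_nat_eq (x 0) hR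
  have := fun i => NeZero.of_pos (hr i)
  by_cases ht0 : t = 0
  · subst ht0
    have hx0 : x 0 = 0 := by rw [← ht, zero_pow hR.ne']
    refine ⟨1, 0, funext fun j => ?_⟩
    cases j using Fin.cases with
    | zero => simp [branchPoint, hx0, hR.ne']
    | succ i =>
      have hdi : Finset.univ.lcm r / r i ≠ 0 := left_ne_zero_of_mul ((hd i).symm ▸ hR.ne')
      have hxi0 : x i.succ = 0 := (pow_eq_zero_iff (hr i).ne').mp (hx0 ▸ hxi i)
      simp [branchPoint, hdi, hxi0]
  · have hη : ∀ i : Fin n, (x i.succ / t ^ (Finset.univ.lcm r / r i)) ^ r i = 1 := fun i => by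
      rw [div_pow, ← pow_mul, hd, hxi, ← ht, div_self (pow_ne_zero _ ht0)]
    refine ⟨fun i => rootsOfUnity.mkOfPowEq _ (hη i), t, funext fun j => ?_⟩
    cases j using Fin.cases with
    | zero => simp [branchPoint, ht]
    | succ i => simp [branchPoint, div_mul_cancel₀ _ (pow_ne_zero _ ht0)]

theorem radical_ideal [IsAlgClosed k] (hr : ∀ i, 0 < r i) :
    (ideal k r).radical = ⨅ η, branchIdeal r η := by
  refine le_antisymm (le_iInf fun η => (Ideal.IsPrime.radical_le_iff inferInstance).mpr
    (ideal_le_branchIdeal η)) fun f hf => ?_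
  rw [← MvPolynomial.vanishingIdeal_zeroLocus_eq_radical (K := k)]
  intro x hx
  obtain ⟨η, t, rfl⟩ := exists_branchPoint_eq hr hx
  exact mem_branchIdeal.mp (Ideal.mem_iInf.mp hf η) t

theorem branchIdeal_le_branchIdeal_mul [Infinite k] (η : (i : Fin n) → rootsOfUnity (r i) k)
    (ζ : rootsOfUnity (Finset.univ.lcm r) k) :
    branchIdeal r η ≤ branchIdeal r (η * rootsOfUnity.lcmPowHom r ζ) := fun f hf =>
  mem_branchIdeal.mpr fun t => by
    rw [branchPoint_mul_lcmPowHom]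
    exact mem_branchIdeal.mp hf _

theorem prod_pow_eq_of_branchIdeal_le [Infinite k] {a b : (i : Fin n) → rootsOfUnity (r i) k}
    (hab : branchIdeal r a ≤ branchIdeal r b) (u v : Fin n → ℕ)
    (huv : ∑ i, Finset.univ.lcm r / r i * u i = ∑ i, Finset.univ.lcm r / r i * v i) :
    ∏ i, ((a⁻¹ * b) i : kˣ) ^ u i = ∏ i, ((a⁻¹ * b) i : kˣ) ^ v i := by
  let mono : ((i : Fin n) → rootsOfUnity (r i) k) → (Fin n → ℕ) → k :=
    fun η w => ∏ i, ((η i : kˣ) : k) ^ w i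
  let f : MvPolynomial (Fin (n + 1)) k :=
    C (mono a v) * ∏ i, X i.succ ^ u i - C (mono a u) * ∏ i, X i.succ ^ v i
  have hfa : f ∈ branchIdeal r a := mem_branchIdeal.mpr fun t => by
    simp only [f, map_sub, map_mul, eval_C, eval_branchPoint_prod_X_pow, huv]
    ring
  have hfb := mem_branchIdeal.mp (hab hfa) 1
  simp only [f, map_sub, map_mul, eval_C, eval_branchPoint_prod_X_pow, one_pow, mul_one] at hfb
  change mono a v * mono b u - mono a u * mono b v = 0 at hfb
  have hne : ∀ w, mono a w ≠ 0 := fun w => Finset.prod_ne_zero_iff.mpr fun i _ => by simp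
  apply Units.ext
  simp only [Units.coe_prod, Units.val_pow_eq_pow_val, Pi.mul_apply, Pi.inv_apply,
    Subgroup.coe_mul, Subgroup.coe_inv, Units.val_mul, mul_pow, Finset.prod_mul_distrib,
    Units.val_inv_eq_inv_val, inv_pow, Finset.prod_inv_distrib]
  change (mono a u)⁻¹ * mono b u = (mono a v)⁻¹ * mono b v
  field_simp [hne]
  linear_combination hfb

theorem branchIdeal_le_iff [Infinite k] (hn : 0 < n) (hr : ∀ i, 0 < r i)
    {a b : (i : Fin n) → rootsOfUnity (r i) k} :
    branchIdeal r a ≤ branchIdeal r b ↔ a⁻¹ * b ∈ (rootsOfUnity.lcmPowHom r).range := by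
  have : Nonempty (Fin n) := ⟨⟨0, hn⟩⟩
  constructor
  · intro hab
    obtain ⟨c, hc⟩ := exists_sum_mul_lcm_div_eq_one r hr
    obtain ⟨ζ, hζ⟩ := exists_pow_eq_of_sum_mul_eq_one hc (prod_pow_eq_of_branchIdeal_le hab)
    have hζR : ζ ^ Finset.univ.lcm r = 1 := by
      let i : Fin n := ⟨0, hn⟩
      rw [← Nat.div_mul_cancel (Finset.dvd_lcm (Finset.mem_univ i)), pow_mul, ← hζ i]
      exact (mem_rootsOfUnity _ _).mp ((a⁻¹ * b) i).2
    exact ⟨⟨ζ, (mem_rootsOfUnity _ _).mpr hζR⟩, funext fun i => Subtype.ext (hζ i).symm⟩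
  · rintro ⟨ζ, hζ⟩
    rw [eq_mul_of_inv_mul_eq hζ.symm]
    exact branchIdeal_le_branchIdeal_mul a ζ

theorem branchIdeal_eq_iff [Infinite k] (hn : 0 < n) (hr : ∀ i, 0 < r i)
    {a b : (i : Fin n) → rootsOfUnity (r i) k} :
    branchIdeal r a = branchIdeal r b ↔ a⁻¹ * b ∈ (rootsOfUnity.lcmPowHom r).range := by
  refine ⟨fun h => (branchIdeal_le_iff hn hr).mp h.le, fun h => le_antisymm
    ((branchIdeal_le_iff hn hr).mpr h) ((branchIdeal_le_iff hn hr).mpr ?_)⟩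
  simpa using inv_mem h

theorem minimalPrimes_ideal [IsAlgClosed k] (hn : 0 < n) (hr : ∀ i, 0 < r i) :
    (ideal k r).minimalPrimes = Set.range (branchIdeal r) := by
  have := fun i => NeZero.of_pos (hr i)
  refine Ideal.minimalPrimes_eq_range_of_radical_eq_iInf (fun _ => inferInstance)
    (radical_ideal hr) fun a b hab => ?_
  rw [branchIdeal_le_iff hn hr] at hab ⊢
  simpa using inv_mem hab

theorem ncard_range_branchIdeal [IsAlgClosed k] (hn : 0 < n) (hr : ∀ i, 0 < r i)
    (hchar : ∀ i, ¬ ringChar k ∣ r i) :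
    (Set.range (branchIdeal (k := k) r)).ncard = (∏ i, r i) / Finset.univ.lcm r := by
  have hrk : ∀ i, (r i : k) ≠ 0 := fun i h => hchar i ((ringChar.spec k _).mp h)
  have := fun i => NeZero.of_pos (hr i)
  have := fun i => NeZero.mk (hrk i)
  have hR := natCast_lcm_ne_zero hrk
  have : NeZero (Finset.univ.lcm r) := ⟨fun h => hR (by simp [h])⟩
  have : NeZero ((Finset.univ.lcm r : ℕ) : k) := ⟨hR⟩
  have hG : Nat.card ((i : Fin n) → rootsOfUnity (r i) k) = ∏ i, r i := by
    rw [Nat.card_pi]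
    exact Finset.prod_congr rfl fun i _ => HasEnoughRootsOfUnity.natCard_rootsOfUnity k (r i)
  have : Nonempty (Fin n) := ⟨⟨0, hn⟩⟩
  have hH : Nat.card (rootsOfUnity.lcmPowHom (M := k) r).range = Finset.univ.lcm r := by
    rw [← Nat.card_congr (MonoidHom.ofInjective (rootsOfUnity.lcmPowHom_injective hr)).toEquiv,
      HasEnoughRootsOfUnity.natCard_rootsOfUnity]
  rw [Set.ncard_range_eq_index _ _ fun a b => branchIdeal_eq_iff hn hr, ← hG,
    ← (rootsOfUnity.lcmPowHom r).range.index_mul_card, hH,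
    Nat.mul_div_cancel _ (Nat.pos_of_ne_zero (NeZero.ne _))]

end

end RootCurve

/-- Let `k` be an algebraically closed field, `n ≥ 1`, and `r₁, …, rₙ` positive integers
coprime to the characteristic of `k`.  Let `R = lcm(r₁, …, rₙ)` and let
`C ⊆ 𝔸^{n+1}` be the affine scheme defined by the equations `yᵢ^{rᵢ} = x`
(realized as the vanishing locus, in the prime spectrum of the polynomial ring
`k[x, y₁, …, yₙ]`, of the ideal generated by the `yᵢ^{rᵢ} - x`).
Then `C` has exactly `(r₁ ⋯ rₙ) / R` irreducible components. -/
theorem card_irreducibleComponents_fiber_curve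
    {k : Type*} [Field k] [IsAlgClosed k] {n : ℕ} (hn : 0 < n)
    (r : Fin n → ℕ) (hr : ∀ i, 0 < r i) (hchar : ∀ i, ¬ (ringChar k ∣ r i)) :
    (irreducibleComponents
        (PrimeSpectrum.zeroLocus
          ((Ideal.span (Set.range fun i : Fin n =>
            (X i.succ : MvPolynomial (Fin (n + 1)) k) ^ r i - X 0) :
              Ideal (MvPolynomial (Fin (n + 1)) k)) : Set (MvPolynomial (Fin (n + 1)) k)))).ncard =
      (∏ i, r i) / Finset.univ.lcm r := by
  rw [PrimeSpectrum.ncard_irreducibleComponents_zeroLocus, ← RootCurve.ideal,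
    RootCurve.minimalPrimes_ideal hn hr, RootCurve.ncard_range_branchIdeal hn hr hchar]
end

section
/- The set A = { x ∈ ℚ(√2) : x²(x − √2) ∈ ℚ } equals { ((t² + 2)/(3t² + 2))·(t + √2) : t ∈ ℚ } ∪ {0}. -/
private lemma expand_aux (a b : ℚ) :
    ((a:ℝ) + b * Real.sqrt 2) ^ 2 * ((a:ℝ) + b * Real.sqrt 2 - Real.sqrt 2) =
      ((a^3 + 6*a*b^2 - 4*a*b : ℚ) : ℝ) +
        ((3*a^2*b - a^2 + 2*b^3 - 2*b^2 : ℚ) : ℝ) * Real.sqrt 2 := by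
  have hs : Real.sqrt 2 ^ 2 = 2 := Real.sq_sqrt (by norm_num)
  push_cast
  linear_combination (3*(a:ℝ)*(b:ℝ)^2 - 2*(a:ℝ)*(b:ℝ) +
    ((b:ℝ)^3 - (b:ℝ)^2) * Real.sqrt 2) * hs

private lemma rat_indep (p q : ℚ) (h : (p : ℝ) + (q : ℝ) * Real.sqrt 2 = 0) :
    p = 0 ∧ q = 0 := by
  by_cases hq : q = 0
  · subst hq
    simp at h
    exact ⟨by exact_mod_cast h, rfl⟩
  · exfalso
    have : Real.sqrt 2 = ((-p/q : ℚ) : ℝ) := by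
      push_cast
      have : (q:ℝ) ≠ 0 := by exact_mod_cast hq
      field_simp
      linarith [h]
    exact Rat.not_irrational _ (this ▸ irrational_sqrt_two)

/-- The set `A = { x ∈ ℚ(√2) : x²(x − √2) ∈ ℚ }` (inside `ℝ`, where the elements of
`ℚ(√2)` are those of the form `a + b√2` with `a, b ∈ ℚ`) equals
`{ ((t² + 2)/(3t² + 2)) · (t + √2) : t ∈ ℚ } ∪ {0}`. -/
theorem rational_values_set_eq_parametrization :
    {x : ℝ | (∃ a b : ℚ, x = (a : ℝ) + b * Real.sqrt 2) ∧
        ∃ q : ℚ, x ^ 2 * (x - Real.sqrt 2) = q} =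
      {x : ℝ | ∃ t : ℚ, x = (((t : ℝ) ^ 2 + 2) / (3 * (t : ℝ) ^ 2 + 2)) *
        ((t : ℝ) + Real.sqrt 2)} ∪ {0} := by
  ext x
  simp only [Set.mem_setOf_eq, Set.mem_union, Set.mem_singleton_iff]
  constructor
  · rintro ⟨⟨a, b, rfl⟩, q, hq⟩
    rw [expand_aux] at hq
    have h0 : ((a^3 + 6*a*b^2 - 4*a*b - q : ℚ) : ℝ) +
        ((3*a^2*b - a^2 + 2*b^3 - 2*b^2 : ℚ) : ℝ) * Real.sqrt 2 = 0 := by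
      push_cast at hq ⊢; linarith
    have hQ : 3*a^2*b - a^2 + 2*b^3 - 2*b^2 = 0 := (rat_indep _ _ h0).2
    by_cases hb : b = 0
    · right
      subst hb
      have ha : a = 0 := by nlinarith [sq_nonneg a]
      subst ha; simp
    · left
      refine ⟨a / b, ?_⟩
      have hden : (3 * (a/b)^2 + 2 : ℚ) ≠ 0 := by positivity
      have hcoef : ((a/b)^2 + 2) / (3 * (a/b)^2 + 2) = b := by
        field_simp
        nlinarith [hQ, sq_nonneg a]
      have hbt : (a/b) * b = a := by field_simp
      have hc : (((a/b : ℚ) : ℝ)^2 + 2) / (3 * ((a/b : ℚ) : ℝ)^2 + 2) = (b : ℝ) := by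
        rw [show (((a/b : ℚ) : ℝ)^2 + 2) / (3 * ((a/b : ℚ) : ℝ)^2 + 2)
            = ((((a/b)^2 + 2) / (3 * (a/b)^2 + 2) : ℚ) : ℝ) by push_cast; ring,
          hcoef]
      rw [hc]
      have hab : ((a/b : ℚ):ℝ) = (a:ℝ)/(b:ℝ) := by push_cast; ring
      have hbR : (b:ℝ) ≠ 0 := by exact_mod_cast hb
      rw [hab]
      field_simp
  · rintro (⟨t, rfl⟩ | rfl)
    · have hden : (3 * t^2 + 2 : ℚ) ≠ 0 := by positivity
      set b : ℚ := (t^2 + 2) / (3*t^2 + 2) with hbdef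
      have hc : (((t : ℝ)^2 + 2) / (3 * (t : ℝ)^2 + 2)) = (b : ℝ) := by
        rw [hbdef]; push_cast; ring
      have hQ : 3*(t*b)^2*b - (t*b)^2 + 2*b^3 - 2*b^2 = 0 := by
        have hb2 : (3*t^2 + 2) * b = t^2 + 2 := by
          rw [hbdef]; field_simp
        nlinarith [hb2, sq_nonneg b]
      constructor
      · exact ⟨t * b, b, by rw [hc]; push_cast; ring⟩
      · refine ⟨(t*b)^3 + 6*(t*b)*b^2 - 4*(t*b)*b, ?_⟩
        have hx : (b:ℝ) * ((t:ℝ) + Real.sqrt 2) = ((t*b : ℚ):ℝ) + (b:ℝ)*Real.sqrt 2 := by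
          push_cast; ring
        rw [hc, hx, expand_aux (t*b) b, hQ]
        push_cast; ring
    · exact ⟨⟨0, 0, by simp⟩, 0, by simp⟩
end

section
/- For every t ∈ ℚ with b ≠ 0 given by b = (t²+2)/(3t²+2), the element x = b(t + √2) ∈ ℚ(√2) satisfies x²(x − √2) ∈ ℚ. -/
/-- For every `t ∈ ℚ`, with `b = (t² + 2)/(3t² + 2)` (which is nonzero), the element
`x = b(t + √2) ∈ ℚ(√2)` satisfies `x²(x − √2) ∈ ℚ`. -/
theorem parametrized_point_has_rational_value (t : ℚ) (b : ℚ)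
    (hb : b = (t ^ 2 + 2) / (3 * t ^ 2 + 2)) :
    b ≠ 0 ∧ ∃ q : ℚ, (((b : ℝ) * ((t : ℝ) + Real.sqrt 2)) ^ 2 *
      (((b : ℝ) * ((t : ℝ) + Real.sqrt 2)) - Real.sqrt 2)) = q := by
  have hd : (3 * t ^ 2 + 2 : ℚ) ≠ 0 := by positivity
  have hb0 : b ≠ 0 := by
    rw [hb]
    have : (0:ℚ) < (t ^ 2 + 2) / (3 * t ^ 2 + 2) := by positivity
    exact ne_of_gt this
  have hkey : b * (3 * t ^ 2 + 2) = t ^ 2 + 2 := by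
    rw [hb]; field_simp
  have hkeyR : (b : ℝ) * (3 * (t:ℝ) ^ 2 + 2) = (t:ℝ) ^ 2 + 2 := by
    exact_mod_cast hkey
  set s : ℝ := Real.sqrt 2 with hs
  have h2 : s ^ 2 = 2 := Real.sq_sqrt (by norm_num)
  refine ⟨hb0, ⟨(t*b)^3 + 2*(t*b)*b^2 + 4*(t*b)*b*(b-1), ?_⟩⟩
  push_cast
  linear_combination (2*(b:ℝ)^2*t*(b-1) + b^3*t + b^2*(b-1)*s) * h2 +
    (s * b^2) * hkeyR
end
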